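/- Let S = s_1,…,s_m have n distinct elements and let F be the set of first-occurrence indices. Then ∑_{i∈F, i≥2} log₂(i−1) + ∑_{i∉F} log₂((i−1)/#_{s_i}(s_1,…,s_{i−1})) ≤ H₀(S)·m + C·m for some absolute constant C. -/

import Mathlib

/-!
With the convention `log 0 = 0`, position `i` contributes exactly `log i - log cᵢ`, where `cᵢ` is
the number of earlier occurrences of `sᵢ`; this also covers first occurrences and `i = 0`.
Bounding `log i` by `log m` and grouping positions by symbol, a symbol occurring `c` times
contributes `c log m - log (c - 1)!`, and `cᶜ / c! ≤ eᶜ` turns this into `c log (m / c) + O(c)`.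
-/

open Finset

/-- Zeroth-order empirical entropy of a sequence. -/
noncomputable def H0 {α : Type*} [DecidableEq α] (S : List α) : ℝ :=
  ∑ a ∈ S.toFinset, ((S.count a : ℝ) / S.length) * Real.logb 2 ((S.length : ℝ) / S.count a)

open Real
open scoped Nat

theorem Real.sum_range_succ_log_eq_log_factorial (n : ℕ) :
    ∑ k ∈ range (n + 1), log k = log n ! := by
  rw [sum_range_succ', ← prod_range_add_one_eq_factorial, Nat.cast_prod,
    log_prod fun k _ => by positivity]
  simp

theorem Real.mul_log_sub_log_factorial_le (n : ℕ) : n * log n - log n ! ≤ n := by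
  rcases n.eq_zero_or_pos with rfl | hn
  · simp
  have hpow : (0 : ℝ) < n ^ n := pow_pos (Nat.cast_pos.mpr hn) n
  have h := log_le_log (by positivity) (pow_div_factorial_le_exp (n : ℝ) n.cast_nonneg n)
  rwa [log_exp, log_div hpow.ne' (by positivity), log_pow] at h

theorem Real.mul_logb_sub_sum_range_logb_le (n : ℕ) :
    n * logb 2 n - ∑ k ∈ range n, logb 2 k ≤ 2 / log 2 * n := by
  have hsum := sum_range_succ_log_eq_log_factorial n
  rw [sum_range_succ] at hsum
  have hlog : log n ≤ n := log_le_self n.cast_nonneg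
  have hbound : n * log n - ∑ k ∈ range n, log k ≤ 2 * n := by
    linarith [mul_log_sub_log_factorial_le n]
  simp only [logb, ← sum_div]
  rw [← mul_div_assoc, ← sub_div, div_mul_eq_mul_div]
  exact div_le_div_of_nonneg_right hbound (log_pos one_lt_two).le

theorem List.sum_count_take_get {α M : Type*} [DecidableEq α] [AddCommMonoid M] (f : ℕ → M)
    (S : List α) :
    ∑ i : Fin S.length, f ((S.take i).count (S.get i)) =
      ∑ a ∈ S.toFinset, ∑ k ∈ Finset.range (S.count a), f k := by
  induction S using List.reverseRecOn with
  | nil => simp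
  | append_singleton T a ih =>
    have hlen : (T ++ [a]).length = T.length + 1 := by simp
    have hcount (b : α) : (T ++ [a]).count b = T.count b + if a = b then 1 else 0 := by
      rw [List.count_append, List.count_singleton]
      simp
    have hnew (b : α) : ∑ k ∈ Finset.range (if a = b then 1 else 0), f (T.count b + k) =
        if a = b then f (T.count a) else 0 := by
      split_ifs with h <;> simp [h]
    have hsub : T.toFinset ⊆ (T ++ [a]).toFinset := by
      rw [List.toFinset_append]
      exact subset_union_left
    rw [← Fin.sum_congr' _ hlen.symm, Fin.sum_univ_castSucc]
    simp only [List.get_eq_getElem] at ih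
    simp only [Fin.val_cast, Fin.val_castSucc, Fin.val_last, List.get_eq_getElem,
      List.getElem_append_left, Fin.is_lt, List.take_append_of_le_length, Fin.is_le',
      List.getElem_concat_length, List.take_left, hcount, sum_range_add, sum_add_distrib, hnew,
      sum_ite_eq, List.mem_toFinset, List.mem_append, List.mem_singleton, or_true, if_true]
    rw [ih, sum_subset hsub fun b _ hb => by simp [List.count_eq_zero.mpr (by simpa using hb)]]

theorem H0_mul_length {α : Type*} [DecidableEq α] (S : List α) :
    H0 S * S.length = ∑ a ∈ S.toFinset, S.count a * logb 2 (S.length / S.count a) := by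
  rw [H0, sum_mul]
  refine sum_congr rfl fun a _ => ?_
  rcases eq_or_ne (S.length : ℝ) 0 with hm | hm
  · simp [hm]
  · field_simp

theorem sum_logb_first_add_sum_logb_repeat_eq {α : Type*} [DecidableEq α] (S : List α) :
    (∑ i ∈ univ.filter (fun i : Fin S.length => S.get i ∉ S.take i.val ∧ 1 ≤ i.val),
        logb 2 (i.val : ℝ)) +
      (∑ i ∈ univ.filter (fun i : Fin S.length => S.get i ∈ S.take i.val),
        logb 2 ((i.val : ℝ) / ((S.take i.val).count (S.get i) : ℝ))) =
      ∑ i : Fin S.length, (logb 2 i - logb 2 ((S.take i).count (S.get i))) := by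
  rw [sum_filter, sum_filter, ← sum_add_distrib]
  refine sum_congr rfl fun i _ => ?_
  simp only [List.get_eq_getElem]
  by_cases hmem : S[i.val] ∈ S.take i
  · have hcount : 0 < (S.take i).count S[i.val] := List.count_pos_iff.mpr hmem
    have hi : 0 < i.val := Nat.pos_of_ne_zero fun h => by simp [h] at hmem
    rw [if_neg (fun h => h.1 hmem), if_pos hmem, zero_add,
      logb_div (by exact_mod_cast hi.ne') (by exact_mod_cast hcount.ne')]
  · rw [if_neg hmem, add_zero, List.count_eq_zero.mpr hmem, Nat.cast_zero, logb_zero, sub_zero]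
    rcases Nat.eq_zero_or_pos i.val with hi | hi
    · simp [hi]
    · exact if_pos ⟨hmem, hi⟩

/-- Lemma 2 (analysis lemma): the total search cost is `(H₀(S) + O(1)) m`. -/
theorem analysis_lemma :
    ∃ C : ℝ, ∀ (α : Type) [LinearOrder α] [DecidableEq α] (S : List α), S ≠ [] →
      (∑ i ∈ Finset.univ.filter
          (fun i : Fin S.length => S.get i ∉ S.take i.val ∧ 1 ≤ i.val),
          Real.logb 2 (i.val : ℝ)) +
        (∑ i ∈ Finset.univ.filter (fun i : Fin S.length => S.get i ∈ S.take i.val),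
          Real.logb 2 ((i.val : ℝ) / ((S.take i.val).count (S.get i) : ℝ)))
      ≤ H0 S * S.length + C * S.length := by
  refine ⟨2 / log 2, fun α _ _ S hS => ?_⟩
  have hm : (1 : ℝ) ≤ S.length := by exact_mod_cast List.length_pos_iff.mpr hS
  have hlength : (S.length : ℝ) = ∑ a ∈ S.toFinset, (S.count a : ℝ) := by
    exact_mod_cast (List.sum_toFinset_count_eq_length S).symm
  rw [sum_logb_first_add_sum_logb_repeat_eq]
  calc ∑ i : Fin S.length, (logb 2 i - logb 2 ((S.take i).count (S.get i)))
      ≤ ∑ i : Fin S.length, (logb 2 S.length - logb 2 ((S.take i).count (S.get i))) := by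
        refine sum_le_sum fun i _ => sub_le_sub_right ?_ _
        rcases Nat.eq_zero_or_pos i.val with hi | hi
        · simpa [hi] using logb_nonneg one_lt_two hm
        · exact logb_le_logb_of_le one_lt_two (by exact_mod_cast hi) (by exact_mod_cast i.is_le')
    _ = ∑ a ∈ S.toFinset,
          (S.count a * logb 2 S.length - ∑ k ∈ range (S.count a), logb 2 k) := by
        rw [sum_sub_distrib, List.sum_count_take_get (fun k => logb 2 (k : ℝ)), sum_const,
          card_univ, Fintype.card_fin, nsmul_eq_mul, hlength, sum_mul, ← sum_sub_distrib]
    _ ≤ ∑ a ∈ S.toFinset,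
          (S.count a * logb 2 (S.length / S.count a) + 2 / log 2 * S.count a) := by
        refine sum_le_sum fun a ha => ?_
        have hc : (0 : ℝ) < S.count a := by
          exact_mod_cast List.count_pos_iff.mpr (List.mem_toFinset.mp ha)
        rw [logb_div (by positivity) hc.ne']
        linarith [mul_logb_sub_sum_range_logb_le (S.count a)]
    _ = H0 S * S.length + 2 / log 2 * S.length := by
        rw [sum_add_distrib, ← H0_mul_length, ← mul_sum, ← hlength]
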